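/- For any partition ρ and any positive integer k, the product of shifted power sums satisfies p^♯_ρ · p^♯_{1^k} = p^♯_{ρ∪1^k} + (a linear combination of shifted power sums p^♯_θ with |θ|₁ < |ρ|₁ + 2k), where |θ|₁ := |θ| + m₁(θ) is the Kerov degree. -/

import Mathlib

open scoped BigOperators

namespace PaperPlancherel

/-! ### Young diagrams encoded by the multiset of their parts -/

/-- Length of row `b` (0-indexed), rows being sorted in weakly decreasing order. -/
def rowLen (P : Multiset ℕ) (b : ℕ) : ℕ := ((P.sort (· ≤ ·)).reverse).getD b 0

/-- The cells of the Young diagram of `P` in English notation, as (row, column)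
pairs (0-indexed). -/
def cells (P : Multiset ℕ) : Finset (ℕ × ℕ) :=
  (Finset.range P.sum ×ˢ Finset.range P.sum).filter fun c => c.2 < rowLen P c.1

/-- The content of a cell: column index minus row index. -/
def ctt (c : ℕ × ℕ) : ℤ := (c.2 : ℤ) - (c.1 : ℤ)

/-- `T` is a standard Young tableau of shape `P`: it carries the entries `1, …, n`
bijectively on the diagram (and the junk value `0` outside), increasing along
rows and down columns. -/
def IsSYT (P : Multiset ℕ) (T : ℕ × ℕ → ℕ) : Prop :=
  (∀ c, c ∉ cells P → T c = 0) ∧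
  Set.BijOn T ↑(cells P) (Set.Icc 1 P.sum) ∧
  (∀ c ∈ cells P, ∀ c' ∈ cells P, c.1 = c'.1 → c.2 < c'.2 → T c < T c') ∧
  (∀ c ∈ cells P, ∀ c' ∈ cells P, c.2 = c'.2 → c.1 < c'.1 → T c < T c')

/-- The set of standard Young tableaux of shape `P`. -/
def SYTs (P : Multiset ℕ) : Set ((ℕ × ℕ) → ℕ) := {T | IsSYT P T}

/-- `dim λ`: the number of standard Young tableaux of shape `P`. -/
noncomputable def dimM (P : Multiset ℕ) : ℕ := (SYTs P).ncard

/-- The content `c_k(T)` of the box of `T` containing the entry `k`. -/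
def contentOf (P : Multiset ℕ) (T : ℕ × ℕ → ℕ) (k : ℕ) : ℤ :=
  ∑ c ∈ (cells P).filter (fun c => T c = k), ctt c

/-- The signed distance `d_k(T) = c_k(T) - c_{k+1}(T)`. -/
noncomputable def dk (P : Multiset ℕ) (T : ℕ × ℕ → ℕ) (k : ℕ) : ℝ :=
  ((contentOf P T k - contentOf P T (k + 1) : ℤ) : ℝ)

/-- The tableau `(k, k+1) T`, obtained by exchanging the entries `k` and `k+1`. -/
def swapT (T : ℕ × ℕ → ℕ) (k : ℕ) : ℕ × ℕ → ℕ :=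
  fun c => if T c = k then k + 1 else if T c = k + 1 then k else T c

/-- The permutation `σ` moves only points of `{1, …, m}`; this is how we view a member
of the symmetric group `S_m` inside `Equiv.Perm ℕ` (adding fixed points). -/
def SuppIn (σ : Equiv.Perm ℕ) (m : ℕ) : Prop := ∀ x, σ x ≠ x → 1 ≤ x ∧ x ≤ m

open Classical in
/-- `rep` is the family of matrices (indexed by pairs of standard Young tableaux of
shape `P`) of the Young seminormal representation: it is multiplicative,
and on the adjacent transposition `(k, k+1)` the entry at `(T, S)` is `1/d_k(T)`
if `T = S`, `√(1 - 1/d_k(T)²)` if `S = (k,k+1)T`, and `0` otherwise. -/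
def IsSeminormal (P : Multiset ℕ)
    (rep : Equiv.Perm ℕ → ((ℕ × ℕ) → ℕ) → ((ℕ × ℕ) → ℕ) → ℝ) : Prop :=
  (∀ T ∈ SYTs P, ∀ S ∈ SYTs P, rep 1 T S = if T = S then 1 else 0) ∧
  (∀ σ τ : Equiv.Perm ℕ, SuppIn σ P.sum → SuppIn τ P.sum →
    ∀ T ∈ SYTs P, ∀ S ∈ SYTs P,
      rep (σ * τ) T S = ∑ᶠ U ∈ SYTs P, rep σ T U * rep τ U S) ∧
  (∀ k : ℕ, 1 ≤ k → k + 1 ≤ P.sum → ∀ T ∈ SYTs P, ∀ S ∈ SYTs P,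
    rep (Equiv.swap k (k + 1)) T S =
      if T = S then 1 / dk P T k
      else if S = swapT T k then Real.sqrt (1 - 1 / (dk P T k) ^ 2) else 0)

/-- The row of `T` containing the entry `k`. -/
def rowOf (P : Multiset ℕ) (T : ℕ × ℕ → ℕ) (k : ℕ) : ℕ :=
  ∑ c ∈ (cells P).filter (fun c => T c = k), c.1

/-- `T` comes strictly before `S` in the last letter order: at the largest entry
whose rows in `T` and `S` differ, the row in `T` is lower (i.e. has larger index). -/
def LLBefore (P : Multiset ℕ) (T S : (ℕ × ℕ) → ℕ) : Prop :=
  T ≠ S ∧ ∃ k : ℕ, rowOf P S k < rowOf P T k ∧ ∀ m, k < m → rowOf P T m = rowOf P S m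

/-- `e` enumerates the standard Young tableaux of shape `P` in the last letter order. -/
def IsLLEnum (P : Multiset ℕ) (e : Fin (dimM P) → (ℕ × ℕ) → ℕ) : Prop :=
  (∀ i, e i ∈ SYTs P) ∧ Function.Injective e ∧
    ∀ i j : Fin (dimM P), i < j → LLBefore P (e i) (e j)

/-- A coherent choice, for every shape, of the Young seminormal representation together
with the enumeration of the standard Young tableaux in the last letter order.  (These
data are uniquely determined by the defining properties `rep_spec` and `enum_spec`.) -/
structure SNSystem where
  rep : Multiset ℕ → Equiv.Perm ℕ → ((ℕ × ℕ) → ℕ) → ((ℕ × ℕ) → ℕ) → ℝ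
  enum : (P : Multiset ℕ) → Fin (dimM P) → (ℕ × ℕ) → ℕ
  rep_spec : ∀ P, IsSeminormal P (rep P)
  enum_spec : ∀ P, IsLLEnum P (enum P)

/-- `PS_u^λ(σ)`: the partial sum of the entries of the representation matrix with
(1-based) row and column indices `≤ u · dim λ`, divided by `dim λ`. -/
noncomputable def PSval (S : SNSystem) (P : Multiset ℕ) (u : ℝ) (σ : Equiv.Perm ℕ) : ℝ :=
  (∑ i : Fin (dimM P), ∑ j : Fin (dimM P),
      if ((i : ℕ) + 1 : ℝ) ≤ u * dimM P ∧ ((j : ℕ) + 1 : ℝ) ≤ u * dimM P then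
        S.rep P σ (S.enum P i) (S.enum P j)
      else 0) / dimM P

/-- `PT_u^λ(σ)`: the partial trace of the representation matrix up to index `u · dim λ`,
divided by `dim λ`. -/
noncomputable def PTval (S : SNSystem) (P : Multiset ℕ) (u : ℝ) (σ : Equiv.Perm ℕ) : ℝ :=
  (∑ i : Fin (dimM P),
      if ((i : ℕ) + 1 : ℝ) ≤ u * dimM P then S.rep P σ (S.enum P i) (S.enum P i) else 0) /
    dimM P

/-- `TS^λ(σ) = PS_1^λ(σ)`: the normalized total sum of the entries. -/
noncomputable def TSval (S : SNSystem) (P : Multiset ℕ) (σ : Equiv.Perm ℕ) : ℝ := PSval S P 1 σ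

/-- The (non-normalized) character `χ^λ(σ)`: the trace of the representation matrix. -/
noncomputable def chiVal (S : SNSystem) (P : Multiset ℕ) (σ : Equiv.Perm ℕ) : ℝ :=
  ∑ i : Fin (dimM P), S.rep P σ (S.enum P i) (S.enum P i)

/-- The normalized character `χ̂^λ(σ) = χ^λ(σ) / dim λ`. -/
noncomputable def chiHat (S : SNSystem) (P : Multiset ℕ) (σ : Equiv.Perm ℕ) : ℝ :=
  chiVal S P σ / dimM P

/-! ### Subpartitions and the co-transition distribution -/

/-- The subpartition `μ ↗ λ` obtained by removing one box from (the last row of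
size) `a`; every distinct part value of `P` yields exactly one removable corner. -/
def subParts (P : Multiset ℕ) (a : ℕ) : Multiset ℕ :=
  if a ≤ 1 then P.erase a else (a - 1) ::ₘ P.erase a

/-- `Q` is obtained from `P` by removing one (removable corner) box. -/
def SubOf (Q P : Multiset ℕ) : Prop := ∃ a ∈ P, Q = subParts P a

/-- The content `y` of the removable corner box of the rows of size `a`. -/
def yC (P : Multiset ℕ) (a : ℕ) : ℤ :=
  (a : ℤ) - ((P.filter fun b => a ≤ b).card : ℤ)

/-- The normalized co-transition distribution `F_ct^λ(v) = Σ_{y_j ≤ v√n} dim μ_j / dim λ`. -/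
noncomputable def Fct (P : Multiset ℕ) (v : ℝ) : ℝ :=
  ∑ a ∈ P.toFinset,
    if (yC P a : ℝ) ≤ v * Real.sqrt P.sum then (dimM (subParts P a) : ℝ) / dimM P else 0

/-- `(F_ct^λ)*(u) = sup { z : F_ct^λ(z) ≤ u }`. -/
noncomputable def FctStar (P : Multiset ℕ) (u : ℝ) : ℝ := sSup {z : ℝ | Fct P z ≤ u}

/-- `MT_u^λ(σ)`: the main term for the partial trace,
`Σ_{y_j < v^λ √n} (dim μ_j / dim λ) · χ̂^{μ_j}(σ)` where `v^λ = (F_ct^λ)*(u)`. -/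
noncomputable def MTval (S : SNSystem) (P : Multiset ℕ) (u : ℝ) (σ : Equiv.Perm ℕ) : ℝ :=
  ∑ a ∈ P.toFinset,
    if (yC P a : ℝ) < FctStar P u * Real.sqrt P.sum then
      (dimM (subParts P a) : ℝ) / dimM P * chiHat S (subParts P a) σ
    else 0

/-- `MS_u^λ(σ)`: the main term for the partial sum,
`Σ_{y_j < v^λ √n} (dim μ_j / dim λ) · TS^{μ_j}(σ)` where `v^λ = (F_ct^λ)*(u)`. -/
noncomputable def MSval (S : SNSystem) (P : Multiset ℕ) (u : ℝ) (σ : Equiv.Perm ℕ) : ℝ :=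
  ∑ a ∈ P.toFinset,
    if (yC P a : ℝ) < FctStar P u * Real.sqrt P.sum then
      (dimM (subParts P a) : ℝ) / dimM P * TSval S (subParts P a) σ
    else 0

/-! ### The Plancherel measure -/

/-- The Plancherel weight `(dim λ)² / n!` of a partition `λ ⊢ n`. -/
noncomputable def plWt (n : ℕ) (lam : Nat.Partition n) : ℝ :=
  (dimM lam.parts : ℝ) ^ 2 / n.factorial

/-- Expectation with respect to the Plancherel measure of size `n`. -/
noncomputable def EPl (n : ℕ) (f : Nat.Partition n → ℝ) : ℝ :=
  ∑ lam : Nat.Partition n, plWt n lam * f lam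

open Classical in
/-- Probability of an event with respect to the Plancherel measure of size `n`. -/
noncomputable def PPl (n : ℕ) (A : Nat.Partition n → Prop) : ℝ :=
  ∑ lam : Nat.Partition n, if A lam then plWt n lam else 0

/-! ### Cycle types -/

/-- `σ` is a product of disjoint cycles whose lengths form the multiset `M`. -/
def HasCycles (σ : Equiv.Perm ℕ) (M : Multiset ℕ) : Prop :=
  ∃ l : List (Equiv.Perm ℕ), σ = l.prod ∧ (∀ τ ∈ l, τ.IsCycle) ∧
    l.Pairwise Equiv.Perm.Disjoint ∧
    ((l.map fun τ => Set.ncard {x | τ x ≠ x} : List ℕ) : Multiset ℕ) = M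

/-- `σ`, viewed as an element of `S_r`, has cycle type `ρ ⊢ r` (the parts of `ρ` equal
to `1` accounting for the fixed points of `σ` in `{1, …, r}`). -/
def HasCycleType (σ : Equiv.Perm ℕ) {r : ℕ} (ρ : Nat.Partition r) : Prop :=
  SuppIn σ r ∧ HasCycles σ (ρ.parts.filter fun k => 2 ≤ k)

/-- The cycle `(s+1, s+2, …, s+k)` as a permutation of `ℕ`. -/
def cycleOn (s k : ℕ) : Equiv.Perm ℕ :=
  ((List.range (k - 1)).map fun j => Equiv.swap (s + 1 + j) (s + 2 + j)).prod

/-- A canonical permutation whose cycles are given by the list `l`, placed on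
consecutive blocks starting after `s`. -/
def permOfList : List ℕ → ℕ → Equiv.Perm ℕ
  | [], _ => 1
  | k :: l, s => cycleOn s k * permOfList l (s + k)

/-- A canonical permutation of cycle type `M` (an element of `S_{|M|}`). -/
def permOfType (M : Multiset ℕ) : Equiv.Perm ℕ := permOfList (M.sort (· ≤ ·)) 0

/-- Evaluation of the `m`-th Hermite polynomial (probabilists' convention,
`H₀ = 1`, `H₁ = x`, `x Hₘ = Hₘ₊₁ + m Hₘ₋₁`). -/
noncomputable def hermiteVal (m : ℕ) (x : ℝ) : ℝ := Polynomial.aeval x (Polynomial.hermite m)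

end PaperPlancherel
namespace PaperPlancherel

/-! ### Partial permutations -/

/-- A partial permutation: a permutation together with a finite domain
(the pair `(σ, d)`; in the algebra only pairs with `σ` supported on `d` occur). -/
@[ext]
structure PartialPerm where
  perm : Equiv.Perm ℕ
  dom : Finset ℕ

instance : Mul PartialPerm := ⟨fun p q => ⟨p.perm * q.perm, p.dom ∪ q.dom⟩⟩
instance : One PartialPerm := ⟨⟨1, ∅⟩⟩

@[simp] lemma PartialPerm.mul_perm (p q : PartialPerm) : (p * q).perm = p.perm * q.perm := rfl
@[simp] lemma PartialPerm.mul_dom (p q : PartialPerm) : (p * q).dom = p.dom ∪ q.dom := rfl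
@[simp] lemma PartialPerm.one_perm : (1 : PartialPerm).perm = 1 := rfl
@[simp] lemma PartialPerm.one_dom : (1 : PartialPerm).dom = ∅ := rfl

instance : Monoid PartialPerm where
  mul_assoc a b c := PartialPerm.ext (mul_assoc _ _ _) (Finset.union_assoc _ _ _)
  one_mul a := PartialPerm.ext (one_mul _) (Finset.empty_union _)
  mul_one a := PartialPerm.ext (mul_one _) (Finset.union_empty _)

/-- The algebra `B_n = ℝ[P_n]` of partial permutations (with real coefficients). -/
abbrev PPAlg := MonoidAlgebra ℝ PartialPerm

/-- The partial Jucys–Murphy element `ξ_i = Σ_{j<i} ((j,i), {j,i})`. -/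
noncomputable def xiPP (i : ℕ) : PPAlg :=
  ∑ j ∈ Finset.Ico 1 i, MonoidAlgebra.single (⟨Equiv.swap j i, {j, i}⟩ : PartialPerm) (1 : ℝ)

open Classical in
/-- The element `α_{ς;n} = Σ (σ,d)`, the sum running over the partial permutations with
`d ⊆ {1,…,n}`, `|d| = |ς|` and `σ` of cycle type `ς` on `d`. -/
noncomputable def alphaM (n : ℕ) (ς : Multiset ℕ) : PPAlg :=
  ∑ d ∈ (Finset.Icc 1 n).powersetCard ς.sum,
    ∑ᶠ σ ∈ {σ : Equiv.Perm ℕ |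
        (∀ x, σ x ≠ x → x ∈ d) ∧ HasCycles σ (ς.filter fun k => 2 ≤ k)},
      MonoidAlgebra.single (⟨σ, d⟩ : PartialPerm) (1 : ℝ)

/-- `Cat(k/2)`: the Catalan number `C(k, k/2)/(k/2+1)` when `k` is even, `0` otherwise. -/
noncomputable def CatHalf (k : ℕ) : ℝ :=
  if Even k then (Nat.choose k (k / 2) : ℝ) / (k / 2 + 1) else 0

/-- The modified power sum `p̃_ν(ξ₁, …, ξ_n)` of partial Jucys–Murphy elements:
`Π_i ( p_{ν_i}(ξ₁,…,ξ_n) − Cat(ν_i/2)·(ν_i/2)!·α_{(1^{ν_i/2+1});n} )`. -/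
noncomputable def ptildePP (n : ℕ) (ν : Multiset ℕ) : PPAlg :=
  ((ν.sort (· ≤ ·)).map fun k =>
      (∑ i ∈ Finset.Icc 1 n, xiPP i ^ k) -
        (CatHalf k * (Nat.factorial (k / 2) : ℝ)) •
          alphaM n (Multiset.replicate (k / 2 + 1) 1)).prod

/-- The monoid morphism `(σ, d) ↦ σ`. -/
def permHom : PartialPerm →* Equiv.Perm ℕ where
  toFun p := p.perm
  map_one' := rfl
  map_mul' _ _ := rfl

/-- The morphism `φ_n : B_n → ℝ[S_∞]`, sending `(σ,d)` to `σ`. -/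
noncomputable def phiN : PPAlg →+* MonoidAlgebra ℝ (Equiv.Perm ℕ) :=
  MonoidAlgebra.mapDomainRingHom ℝ permHom

/-- The linear extension of the normalized character `χ̂^λ` to the group algebra. -/
noncomputable def chiHatExt (S : SNSystem) (P : Multiset ℕ)
    (x : MonoidAlgebra ℝ (Equiv.Perm ℕ)) : ℝ :=
  x.coeff.sum fun g c => c * chiHat S P g

/-! ### Power sums of contents -/

/-- The power sum `p_k(C_λ)` of the multiset of contents of the diagram. -/
noncomputable def pContents (P : Multiset ℕ) (k : ℕ) : ℝ :=
  ∑ c ∈ cells P, ((ctt c : ℝ)) ^ k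

/-- The modified power sum evaluated on the multiset of contents:
`p̃_ν(C_λ) = Π_i ( p_{ν_i}(C_λ) − Cat(ν_i/2)·(ν_i/2)!·C(n, ν_i/2+1) )`,
the last factor being the evaluation `χ̂^λ(φ_n(α_{(1^{ν_i/2+1});n}))`. -/
noncomputable def ptildeC (P : Multiset ℕ) (ν : Multiset ℕ) : ℝ :=
  (ν.map fun k =>
      pContents P k -
        CatHalf k * (Nat.factorial (k / 2) : ℝ) * (Nat.choose P.sum (k / 2 + 1) : ℝ)).prod

/-! ### Skew shapes -/

/-- The cells of the skew diagram `λ/ν`. -/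
def cellsD (P Q : Multiset ℕ) : Finset (ℕ × ℕ) := cells P \ cells Q

/-- A standard Young tableau of skew shape `λ/ν`. -/
def IsSkewSYT (P Q : Multiset ℕ) (T : ℕ × ℕ → ℕ) : Prop :=
  (∀ c, c ∉ cellsD P Q → T c = 0) ∧
  Set.BijOn T ↑(cellsD P Q) (Set.Icc 1 (P.sum - Q.sum)) ∧
  (∀ c ∈ cellsD P Q, ∀ c' ∈ cellsD P Q, c.1 = c'.1 → c.2 < c'.2 → T c < T c') ∧
  (∀ c ∈ cellsD P Q, ∀ c' ∈ cellsD P Q, c.2 = c'.2 → c.1 < c'.1 → T c < T c')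

/-- `dim λ/ν`: the number of standard Young tableaux of skew shape `λ/ν`
(zero unless `ν ⊆ λ`). -/
noncomputable def dimSkew (P Q : Multiset ℕ) : ℕ :=
  if cells Q ⊆ cells P then Set.ncard {T | IsSkewSYT P Q T} else 0

/-- The restriction of a tableau to its entries `≤ r` (with `0` outside). -/
def restTab (r : ℕ) (T : ℕ × ℕ → ℕ) : ℕ × ℕ → ℕ := fun c => if T c ≤ r then T c else 0

open Classical in
/-- The cells of a tableau carrying the entries `1, …, r`. -/
noncomputable def restCells (P : Multiset ℕ) (r : ℕ) (T : ℕ × ℕ → ℕ) : Finset (ℕ × ℕ) :=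
  (cells P).filter fun c => 1 ≤ T c ∧ T c ≤ r

/-- The multiset of row lengths of a finite set of cells. -/
def shapeRows (s : Finset (ℕ × ℕ)) : Multiset ℕ :=
  (s.image Prod.fst).val.map fun b => (s.filter fun c => c.1 = b).card

/-! ### Shifted power sums -/

/-- The shifted power sum `p^♯_ρ`, as the function on partitions given by
`p^♯_ρ(λ) = n^{↓r} χ̂^λ_{ρ 1^{n-r}}` for `λ ⊢ n ≥ r`, and `0` otherwise. -/
noncomputable def pSharp (S : SNSystem) {r : ℕ} (ρ : Nat.Partition r) (n : ℕ)
    (lam : Nat.Partition n) : ℝ :=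
  if r ≤ n then (n.descFactorial r : ℝ) * chiHat S lam.parts (permOfType ρ.parts) else 0

/-- Functions on the set of all partitions (of all sizes). -/
abbrev PartFun := ∀ n : ℕ, Nat.Partition n → ℝ

/-- `V^<_k`: the span of the shifted power sums `p^♯_θ` of Kerov degree
`|θ|₁ = |θ| + m₁(θ) < k`. -/
noncomputable def Vlt (S : SNSystem) (k : ℕ) : Submodule ℝ PartFun :=
  Submodule.span ℝ {f | ∃ (m : ℕ) (θ : Nat.Partition m),
    m + θ.parts.count 1 < k ∧ f = fun n lam => pSharp S θ n lam}

/-- `Ṽ^=_k`: the span of the shifted power sums `p^♯_θ` with `|θ|₁ = k` and `m₁(θ) > 0`. -/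
noncomputable def Veq (S : SNSystem) (k : ℕ) : Submodule ℝ PartFun :=
  Submodule.span ℝ {f | ∃ (m : ℕ) (θ : Nat.Partition m),
    m + θ.parts.count 1 = k ∧ 0 < θ.parts.count 1 ∧ f = fun n lam => pSharp S θ n lam}

/-- The partition `(1^k)` of `k`. -/
def onesPartition (k : ℕ) : Nat.Partition k where
  parts := Multiset.replicate k 1
  parts_pos := by intro i hi; rcases Multiset.eq_of_mem_replicate hi with rfl; norm_num
  parts_sum := by simp

/-- The union `ρ ∪ θ` of two partitions. -/
def unionPartition {a b : ℕ} (ρ : Nat.Partition a) (θ : Nat.Partition b) :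
    Nat.Partition (a + b) where
  parts := ρ.parts + θ.parts
  parts_pos := by
    intro i hi
    rcases Multiset.mem_add.mp hi with h | h
    exacts [ρ.parts_pos h, θ.parts_pos h]
  parts_sum := by simp [ρ.parts_sum, θ.parts_sum]

end PaperPlancherel
namespace PaperPlancherel

/-! ### Auxiliary lemmas for Statement 13 -/

section Aux

/-- helper product of adjacent swaps -/
private def gP (s m : ℕ) : Equiv.Perm ℕ :=
  ((List.range m).map fun j => Equiv.swap (s + 1 + j) (s + 2 + j)).prod

lemma cycleOn_eq_gP (s k : ℕ) : cycleOn s k = gP s (k - 1) := rfl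

lemma list_prod_ne_of (l : List (Equiv.Perm ℕ)) (x : ℕ) (h : l.prod x ≠ x) :
    ∃ τ ∈ l, τ x ≠ x := by
  induction l with
  | nil => simp at h
  | cons a l ih =>
    by_cases hl : l.prod x = x
    · refine ⟨a, by simp, ?_⟩
      intro ha
      apply h
      simp [List.prod_cons, Equiv.Perm.mul_apply, hl, ha]
    · obtain ⟨τ, hτ, hτx⟩ := ih hl
      exact ⟨τ, by simp [hτ], hτx⟩

lemma gP_suppIn (s m x : ℕ) (h : gP s m x ≠ x) : s + 1 ≤ x ∧ x ≤ s + m + 1 := by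
  obtain ⟨τ, hτ, hτx⟩ := list_prod_ne_of _ _ h
  simp only [gP, List.mem_map, List.mem_range] at hτ
  obtain ⟨j, hj, rfl⟩ := hτ
  have : x = s + 1 + j ∨ x = s + 2 + j := by
    by_contra hc
    push_neg at hc
    exact hτx (Equiv.swap_apply_of_ne_of_ne hc.1 hc.2)
  rcases this with rfl | rfl <;> omega

lemma cycleOn_suppIn (s k x : ℕ) (h : cycleOn s k x ≠ x) : s + 1 ≤ x ∧ x ≤ s + k := by
  rcases k with _ | k
  · rw [cycleOn_eq_gP] at h
    simp [gP] at h
  · have := gP_suppIn s k x h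
    omega

lemma permOfList_suppIn (l : List ℕ) (s x : ℕ) (h : permOfList l s x ≠ x) :
    s + 1 ≤ x ∧ x ≤ s + l.sum := by
  induction l generalizing s with
  | nil => simp [permOfList] at h
  | cons k l ih =>
    rw [permOfList] at h
    by_cases h2 : permOfList l (s + k) x = x
    · rw [Equiv.Perm.mul_apply, h2] at h
      have := cycleOn_suppIn s k x h
      simp only [List.sum_cons]
      omega
    · have := ih (s + k) h2
      by_cases h1 : cycleOn s k (permOfList l (s + k) x) = permOfList l (s + k) x
      · rw [Equiv.Perm.mul_apply, h1] at h
        simp only [List.sum_cons]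
        omega
      · have h3 := cycleOn_suppIn s k _ h1
        -- permOfList l (s+k) x is in [s+k+1, s+k+sum l] and also in [s+1,s+k]: contradiction
        simp only [List.sum_cons]
        omega

lemma gP_apply (s m i : ℕ) (h1 : 1 ≤ i) (h2 : i ≤ m) : gP s m (s + i) = s + i + 1 := by
  induction m with
  | zero => omega
  | succ m ih =>
    have hstep : gP s (m + 1) = gP s m * Equiv.swap (s + 1 + m) (s + 2 + m) := by
      simp [gP, List.range_succ]
    rw [hstep, Equiv.Perm.mul_apply]
    rcases Nat.lt_or_ge i (m + 1) with hi | hi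
    · rw [Equiv.swap_apply_of_ne_of_ne (by omega) (by omega)]
      exact ih (by omega)
    · have hieq : s + i = s + 1 + m := by omega
      rw [hieq, Equiv.swap_apply_left]
      have hfix : gP s m (s + 2 + m) = s + 2 + m := by
        by_contra hc
        have := gP_suppIn s m _ hc
        omega
      rw [hfix]
      omega

lemma cycleOn_apply (s k i : ℕ) (h1 : 1 ≤ i) (h2 : i + 1 ≤ k) :
    cycleOn s k (s + i) = s + i + 1 := by
  rw [cycleOn_eq_gP]
  exact gP_apply s (k - 1) i h1 (by omega)

lemma cycleOn_conj (τ : Equiv.Perm ℕ) (s t k : ℕ)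
    (hτ : ∀ i, 1 ≤ i → i ≤ k → τ (s + i) = t + i) :
    τ * cycleOn s k * τ⁻¹ = cycleOn t k := by
  have : (MulAut.conj τ) (cycleOn s k) = cycleOn t k := by
    rw [cycleOn, map_list_prod, List.map_map, cycleOn]
    congr 1
    apply List.map_congr_left
    intro j hj
    simp only [List.mem_range] at hj
    simp only [Function.comp_apply, MulAut.conj_apply]
    rw [← Equiv.swap_apply_apply]
    have e1 : τ (s + 1 + j) = t + 1 + j := by
      have := hτ (1 + j) (by omega) (by omega)
      rw [show s + (1 + j) = s + 1 + j by omega] at this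
      rw [this]; omega
    have e2 : τ (s + 2 + j) = t + 2 + j := by
      have := hτ (2 + j) (by omega) (by omega)
      rw [show s + (2 + j) = s + 2 + j by omega] at this
      rw [this]; omega
    rw [e1, e2]
  simpa [MulAut.conj_apply] using this

lemma permOfList_conj (l : List ℕ) (s t : ℕ) (τ : Equiv.Perm ℕ)
    (hτ : ∀ i, 1 ≤ i → i ≤ l.sum → τ (s + i) = t + i) :
    τ * permOfList l s * τ⁻¹ = permOfList l t := by
  induction l generalizing s t with
  | nil => simp [permOfList]
  | cons k l ih =>
    rw [permOfList, permOfList]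
    have hc : τ * cycleOn s k * τ⁻¹ = cycleOn t k := by
      apply cycleOn_conj
      intro i h1 h2
      exact hτ i h1 (by simp only [List.sum_cons]; omega)
    have hr : τ * permOfList l (s + k) * τ⁻¹ = permOfList l (t + k) := by
      apply ih
      intro i h1 h2
      have := hτ (k + i) (by omega) (by simp only [List.sum_cons]; omega)
      rw [show s + (k + i) = s + k + i by omega] at this
      rw [this]; omega
    calc τ * (cycleOn s k * permOfList l (s + k)) * τ⁻¹
        = (τ * cycleOn s k * τ⁻¹) * (τ * permOfList l (s + k) * τ⁻¹) := by
          group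
      _ = cycleOn t k * permOfList l (t + k) := by rw [hc, hr]

lemma suppIn_mul {σ τ : Equiv.Perm ℕ} {m : ℕ} (hσ : SuppIn σ m) (hτ : SuppIn τ m) :
    SuppIn (σ * τ) m := by
  intro x hx
  by_cases h : τ x = x
  · exact hσ x (by rwa [Equiv.Perm.mul_apply, h] at hx)
  · exact hτ x h

lemma suppIn_inv {σ : Equiv.Perm ℕ} {m : ℕ} (hσ : SuppIn σ m) : SuppIn σ⁻¹ m := by
  intro x hx
  apply hσ
  intro h
  exact hx (by nth_rewrite 1 [← h]; exact Equiv.symm_apply_apply σ x)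

lemma suppIn_mono {σ : Equiv.Perm ℕ} {m m' : ℕ} (h : m ≤ m') (hσ : SuppIn σ m) :
    SuppIn σ m' := fun x hx => ⟨(hσ x hx).1, le_trans (hσ x hx).2 h⟩

lemma suppIn_permOfList (l : List ℕ) (s : ℕ) : SuppIn (permOfList l s) (s + l.sum) := by
  intro x hx
  have := permOfList_suppIn l s x hx
  omega

lemma suppIn_cycleOn (s k : ℕ) : SuppIn (cycleOn s k) (s + k) := by
  intro x hx
  have := cycleOn_suppIn s k x hx
  omega

end Aux

section Trace

variable (S : SNSystem) (P : Multiset ℕ)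

open Classical in
lemma range_enum (hd : 0 < dimM P) :
    SYTs P = ↑(Finset.univ.image (S.enum P)) := by
  have hinj : Function.Injective (S.enum P) := (S.enum_spec P).2.1
  have hsub : ↑(Finset.univ.image (S.enum P)) ⊆ SYTs P := by
    intro T hT
    simp only [Finset.coe_image, Finset.coe_univ, Set.image_univ, Set.mem_range] at hT
    obtain ⟨i, rfl⟩ := hT
    exact (S.enum_spec P).1 i
  have hfin : (SYTs P).Finite := Set.finite_of_ncard_ne_zero (by
    change dimM P ≠ 0; omega)
  have hcard : (↑(Finset.univ.image (S.enum P)) : Set ((ℕ × ℕ) → ℕ)).ncard = dimM P := by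
    rw [Set.ncard_coe_finset, Finset.card_image_of_injective _ hinj, Finset.card_univ,
      Fintype.card_fin]
  symm
  apply Set.eq_of_subset_of_ncard_le hsub ?_ hfin
  rw [hcard]
  exact le_rfl

lemma finsum_SYTs (hd : 0 < dimM P) (f : ((ℕ × ℕ) → ℕ) → ℝ) :
    ∑ᶠ U ∈ SYTs P, f U = ∑ u : Fin (dimM P), f (S.enum P u) := by
  classical
  rw [range_enum S P hd, finsum_mem_coe_finset]
  exact Finset.sum_image (fun a _ b _ h => (S.enum_spec P).2.1 h)

lemma chiVal_one : chiVal S P 1 = (dimM P : ℝ) := by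
  rw [chiVal]
  have : ∀ i : Fin (dimM P), S.rep P 1 (S.enum P i) (S.enum P i) = 1 := by
    intro i
    rw [(S.rep_spec P).1 _ ((S.enum_spec P).1 i) _ ((S.enum_spec P).1 i), if_pos rfl]
  rw [Finset.sum_congr rfl fun i _ => this i]
  simp

lemma chiVal_mul_comm {a b : Equiv.Perm ℕ} (ha : SuppIn a P.sum) (hb : SuppIn b P.sum) :
    chiVal S P (a * b) = chiVal S P (b * a) := by
  rcases Nat.eq_zero_or_pos (dimM P) with hd | hd
  · rw [chiVal, chiVal]
    have h0 : IsEmpty (Fin (dimM P)) := by rw [hd]; infer_instance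
    simp
  · have key : ∀ (x y : Equiv.Perm ℕ), SuppIn x P.sum → SuppIn y P.sum →
        chiVal S P (x * y) =
          ∑ i : Fin (dimM P), ∑ u : Fin (dimM P),
            S.rep P x (S.enum P i) (S.enum P u) * S.rep P y (S.enum P u) (S.enum P i) := by
      intro x y hx hy
      rw [chiVal]
      apply Finset.sum_congr rfl
      intro i _
      rw [(S.rep_spec P).2.1 x y hx hy _ ((S.enum_spec P).1 i) _ ((S.enum_spec P).1 i),
        finsum_SYTs S P hd]
    rw [key a b ha hb, key b a hb ha, Finset.sum_comm]
    apply Finset.sum_congr rfl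
    intro i _
    apply Finset.sum_congr rfl
    intro u _
    ring

lemma chiHat_conj {τ σ : Equiv.Perm ℕ} (hτ : SuppIn τ P.sum) (hσ : SuppIn σ P.sum) :
    chiHat S P (τ * σ * τ⁻¹) = chiHat S P σ := by
  rw [chiHat, chiHat]
  congr 1
  have h1 : SuppIn (σ * τ⁻¹) P.sum := suppIn_mul hσ (suppIn_inv hτ)
  calc chiVal S P (τ * σ * τ⁻¹) = chiVal S P (τ * (σ * τ⁻¹)) := by rw [mul_assoc]
    _ = chiVal S P ((σ * τ⁻¹) * τ) := chiVal_mul_comm S P hτ h1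
    _ = chiVal S P σ := by rw [mul_assoc, inv_mul_cancel, mul_one]

end Trace

section SortLemmas

lemma sort_add_replicate (M : Multiset ℕ) (hM : ∀ x ∈ M, 1 ≤ x) (j : ℕ) :
    (M + Multiset.replicate j 1).sort (· ≤ ·) =
      List.replicate j 1 ++ M.sort (· ≤ ·) := by
  have hrepl : (List.replicate j (1:ℕ)).Pairwise (· ≤ ·) := by
    induction j with
    | zero => simp
    | succ j ih =>
      rw [List.replicate_succ, List.pairwise_cons]
      refine ⟨fun b hb => ?_, ih⟩
      rcases List.eq_of_mem_replicate hb with rfl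
      exact le_rfl
  have hp : ((M + Multiset.replicate j 1).sort (· ≤ ·)).Perm
      (List.replicate j 1 ++ M.sort (· ≤ ·)) := by
    rw [← Multiset.coe_eq_coe, Multiset.sort_eq, ← Multiset.coe_add, Multiset.sort_eq,
      show ((List.replicate j 1 : List ℕ) : Multiset ℕ) = Multiset.replicate j 1 from
        (Multiset.coe_replicate j 1), add_comm]
  refine List.Perm.eq_of_pairwise' (Multiset.pairwise_sort _ _) ?_ hp
  rw [List.pairwise_append]
  refine ⟨hrepl, Multiset.pairwise_sort _ _, ?_⟩
  intro x hx y hy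
  rcases List.eq_of_mem_replicate hx with rfl
  exact hM y (Multiset.mem_sort (· ≤ ·) |>.mp hy)

lemma permOfList_replicate_append (j : ℕ) (l : List ℕ) (s : ℕ) :
    permOfList (List.replicate j 1 ++ l) s = permOfList l (s + j) := by
  induction j generalizing s with
  | zero => simp [permOfList]
  | succ j ih =>
    rw [List.replicate_succ, List.cons_append, permOfList]
    have h1 : cycleOn s 1 = 1 := by
      simp [cycleOn]
    rw [h1, one_mul, ih (s + 1)]
    congr 1
    omega

lemma permOfType_add_replicate (M : Multiset ℕ) (hM : ∀ x ∈ M, 1 ≤ x) (j : ℕ) :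
    permOfType (M + Multiset.replicate j 1) = permOfList (M.sort (· ≤ ·)) j := by
  rw [permOfType, sort_add_replicate M hM j, permOfList_replicate_append, Nat.zero_add]

lemma permOfType_replicate_one (k : ℕ) : permOfType (Multiset.replicate k 1) = 1 := by
  have : (Multiset.replicate k 1 : Multiset ℕ) = 0 + Multiset.replicate k 1 := by simp
  rw [this, permOfType_add_replicate 0 (by simp) k]
  rw [Multiset.sort_zero, permOfList]

end SortLemmas

section Shift

lemma chiHat_permOfList_shift (S : SNSystem) (P : Multiset ℕ) (L : List ℕ) (j : ℕ)
    (h : L.sum + j ≤ P.sum) :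
    chiHat S P (permOfList L j) = chiHat S P (permOfList L 0) := by
  induction j with
  | zero => rfl
  | succ j ih =>
    set r := L.sum with hr
    have hτapp : ∀ i, 1 ≤ i → i ≤ r → cycleOn j (r + 1) (j + i) = (j + 1) + i := by
      intro i h1 h2
      have := cycleOn_apply j (r + 1) i h1 (by omega)
      omega
    have hconj := permOfList_conj L j (j + 1) (cycleOn j (r + 1)) hτapp
    have hsτ : SuppIn (cycleOn j (r + 1)) P.sum :=
      suppIn_mono (by omega) (suppIn_cycleOn j (r + 1))
    have hsσ : SuppIn (permOfList L j) P.sum :=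
      suppIn_mono (by omega) (suppIn_permOfList L j)
    rw [← hconj, chiHat_conj S P hsτ hsσ]
    exact ih (by omega)

end Shift

section Desc

lemma descFactorial_cast_succ (n s : ℕ) :
    (n.descFactorial (s + 1) : ℝ) = ((n : ℝ) - s) * n.descFactorial s := by
  rcases le_or_gt s n with h | h
  · rw [Nat.descFactorial_succ, Nat.cast_mul, Nat.cast_sub h]
  · rw [Nat.descFactorial_of_lt h, Nat.descFactorial_of_lt (by omega)]
    simp

lemma desc_expand (r : ℕ) (k : ℕ) : ∃ c : ℕ → ℝ, c k = 1 ∧ ∀ n : ℕ,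
    (n.descFactorial r : ℝ) * n.descFactorial k =
      ∑ j ∈ Finset.range (k + 1), c j * n.descFactorial (r + j) := by
  induction k with
  | zero => exact ⟨fun _ => 1, rfl, fun n => by simp⟩
  | succ k ih =>
    obtain ⟨c, hck, hc⟩ := ih
    refine ⟨fun j => (if j = 0 then 0 else c (j - 1)) +
      (if j ≤ k then c j * ((r : ℝ) + j - k) else 0), by simp [hck], fun n => ?_⟩
    have key : (n.descFactorial r : ℝ) * n.descFactorial (k + 1) =
        ∑ j ∈ Finset.range (k + 1), c j * n.descFactorial (r + j + 1) +
        ∑ j ∈ Finset.range (k + 1), c j * ((r : ℝ) + j - k) * n.descFactorial (r + j) := by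
      rw [descFactorial_cast_succ n k, show (n.descFactorial r : ℝ) *
        (((n : ℝ) - k) * n.descFactorial k) =
        ((n : ℝ) - k) * ((n.descFactorial r : ℝ) * n.descFactorial k) by ring, hc n,
        Finset.mul_sum, ← Finset.sum_add_distrib]
      apply Finset.sum_congr rfl
      intro j _
      rw [descFactorial_cast_succ n (r + j)]
      push_cast
      ring
    rw [key]
    have split : ∀ j, ((if j = 0 then (0:ℝ) else c (j - 1)) +
        (if j ≤ k then c j * ((r : ℝ) + j - k) else 0)) * (n.descFactorial (r + j) : ℝ)
        = (if j = 0 then (0:ℝ) else c (j - 1)) * n.descFactorial (r + j)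
          + (if j ≤ k then c j * ((r : ℝ) + j - k) else 0) * n.descFactorial (r + j) :=
      fun j => add_mul _ _ _
    have h1 : ∑ j ∈ Finset.range (k + 1 + 1),
        (if j = 0 then (0:ℝ) else c (j - 1)) * (n.descFactorial (r + j) : ℝ) =
        ∑ j ∈ Finset.range (k + 1), c j * (n.descFactorial (r + j + 1) : ℝ) := by
      rw [Finset.sum_range_succ']
      simp only [reduceIte, zero_mul, add_zero]
      refine Finset.sum_congr rfl fun j _ => ?_
      rw [if_neg (Nat.succ_ne_zero j), Nat.add_sub_cancel,
        show r + (j + 1) = r + j + 1 by omega]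
    have h2 : ∑ j ∈ Finset.range (k + 1 + 1),
        (if j ≤ k then c j * ((r:ℝ) + j - k) else 0) * (n.descFactorial (r + j) : ℝ) =
        ∑ j ∈ Finset.range (k + 1), c j * ((r:ℝ) + j - k) * (n.descFactorial (r + j) : ℝ) := by
      rw [Finset.sum_range_succ, if_neg (by omega : ¬ k + 1 ≤ k), zero_mul, add_zero]
      refine Finset.sum_congr rfl fun j hj => ?_
      rw [Finset.mem_range] at hj
      rw [if_pos (by omega)]
    rw [Finset.sum_congr rfl (fun j _ => split j), Finset.sum_add_distrib, h1, h2]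

end Desc

section PSharpEval

lemma pSharp_eq (S : SNSystem) {m : ℕ} (θ : Nat.Partition m) (n : ℕ) (lam : Nat.Partition n) :
    pSharp S θ n lam =
      (n.descFactorial m : ℝ) * chiHat S lam.parts (permOfType θ.parts) := by
  rw [pSharp]
  split
  · rfl
  · rw [Nat.descFactorial_of_lt (by omega), Nat.cast_zero, zero_mul]

lemma chiHat_of_dim_zero (S : SNSystem) (P : Multiset ℕ) (hd : dimM P = 0)
    (σ : Equiv.Perm ℕ) : chiHat S P σ = 0 := by
  rw [chiHat, hd, Nat.cast_zero, div_zero]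

end PSharpEval

/-- For any partition `ρ` and positive integer `k`,
`p^♯_ρ · p^♯_{1^k} = p^♯_{ρ∪1^k} + (lower terms)` where the lower terms lie in
`V^<_{|ρ|₁+2k}`, the span of the `p^♯_θ` of Kerov degree `|θ|₁ < |ρ|₁ + 2k`. -/
theorem statement13 (S : SNSystem) (r : ℕ) (ρ : Nat.Partition r) (k : ℕ) (hk : 0 < k) :
    ∃ g ∈ Vlt S (r + ρ.parts.count 1 + 2 * k),
      (fun n lam => pSharp S ρ n lam * pSharp S (onesPartition k) n lam) =
        (fun n lam => pSharp S (unionPartition ρ (onesPartition k)) n lam) + g := by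
  classical
  obtain ⟨c, hck, hc⟩ := desc_expand r k
  refine ⟨∑ j ∈ Finset.range k, c j •
      (fun n lam => pSharp S (unionPartition ρ (onesPartition j)) n lam : PartFun),
    ?_, ?_⟩
  · apply Submodule.sum_mem
    intro j hj
    rw [Finset.mem_range] at hj
    apply Submodule.smul_mem
    apply Submodule.subset_span
    refine ⟨r + j, unionPartition ρ (onesPartition j), ?_, rfl⟩
    have hcount : (unionPartition ρ (onesPartition j)).parts.count 1 =
        ρ.parts.count 1 + j := by
      show (ρ.parts + Multiset.replicate j 1).count 1 = _
      rw [Multiset.count_add, Multiset.count_replicate, if_pos rfl]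
    rw [hcount]
    omega
  · funext n lam
    simp only [Pi.add_apply, Finset.sum_apply, Pi.smul_apply, smul_eq_mul]
    set P := lam.parts with hP
    set L := ρ.parts.sort (· ≤ ·) with hL
    have hLsum : L.sum = r := by
      have h1 : (↑L : Multiset ℕ).sum = ρ.parts.sum := by rw [hL, Multiset.sort_eq]
      rwa [Multiset.sum_coe, ρ.parts_sum] at h1
    have hρperm : permOfType ρ.parts = permOfList L 0 := rfl
    have hones : permOfType (onesPartition k).parts = 1 := permOfType_replicate_one k
    have hunion : ∀ j : ℕ, permOfType ((unionPartition ρ (onesPartition j)).parts) =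
        permOfList L j := fun j =>
      permOfType_add_replicate ρ.parts (fun x hx => ρ.parts_pos hx) j
    simp only [pSharp_eq, hρperm, hones, hunion, ← hP]
    rcases Nat.eq_zero_or_pos (dimM P) with hd | hd
    · simp [chiHat_of_dim_zero S P hd]
    · have hdd : chiHat S P 1 = 1 := by
        rw [chiHat, chiVal_one, div_self (Nat.cast_ne_zero.mpr (by omega))]
      rw [hdd]
      have hPsum : P.sum = n := lam.parts_sum
      have hχ : ∀ j : ℕ, (n.descFactorial (r + j) : ℝ) * chiHat S P (permOfList L j) =
          (n.descFactorial (r + j) : ℝ) * chiHat S P (permOfList L 0) := by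
        intro j
        rcases le_or_gt (r + j) n with h | h
        · rw [chiHat_permOfList_shift S P L j (by omega)]
        · rw [Nat.descFactorial_of_lt h, Nat.cast_zero, zero_mul, zero_mul]
      have e : ∀ j ∈ Finset.range k,
          c j * ((n.descFactorial (r + j) : ℝ) * chiHat S P (permOfList L j)) =
          c j * ((n.descFactorial (r + j) : ℝ) * chiHat S P (permOfList L 0)) :=
        fun j _ => by rw [hχ j]
      have hcomb : (n.descFactorial (r + k) : ℝ) * chiHat S P (permOfList L k) +
          ∑ j ∈ Finset.range k, c j * ((n.descFactorial (r + j) : ℝ) *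
            chiHat S P (permOfList L j)) =
          ∑ j ∈ Finset.range (k + 1), c j * ((n.descFactorial (r + j) : ℝ) *
            chiHat S P (permOfList L 0)) := by
        rw [Finset.sum_congr rfl e, Finset.sum_range_succ, hck, one_mul, hχ k]
        ring
      rw [hcomb]
      have hfin : ∑ j ∈ Finset.range (k + 1), c j * ((n.descFactorial (r + j) : ℝ) *
          chiHat S P (permOfList L 0)) =
          ((n.descFactorial r : ℝ) * n.descFactorial k) * chiHat S P (permOfList L 0) := by
        rw [hc n, Finset.sum_mul]
        exact Finset.sum_congr rfl fun j _ => by ring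
      rw [hfin]
      ring

end PaperPlancherel
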